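/- arXiv:alg-geom/9503013 — 3 statements merged into one kernel-verified Lean document; each statement's English description precedes it below -/
import Mathlib

section
/- Let w₁,...,wₙ, d be positive integers and let f₀ be quasihomogeneous of degree d. Suppose b₁,...,bₙ are quasihomogeneous polynomials with deg bᵢ = wᵢ (or bᵢ = 0), and suppose the partial derivatives ∂f₀/∂x₁,...,∂f₀/∂xₙ form a regular sequence in ℂ[x₁,...,xₙ]. If 2wᵢ < d for all i, i.e. d − wⱼ > wᵢ for all i,j, and Σᵢ bᵢ·∂f₀/∂xᵢ = 0, then bᵢ = 0 for all i. -/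
/-!
Write `I_m` for the ideal of polynomials all of whose monomials have weight `> m`. Since
`∂f₀/∂xⱼ` is quasihomogeneous of degree `d - wⱼ > wᵢ`, every partial lies in `I_{wᵢ}`. Regularity
of the last partial modulo the earlier ones puts `bₙ` in the ideal they generate, hence in
`I_{wₙ}`; a nonzero polynomial of weight `wₙ` is not there, so `bₙ = 0` and we induct on `n`.
-/

open MvPolynomial Finsupp RingTheory.Sequence

theorem RingTheory.Sequence.IsWeaklyRegular.mem_ofList_of_mul_mem {R : Type*} [CommRing R]
    {rs : List R} {r b : R} (h : IsWeaklyRegular R (rs ++ [r]))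
    (hb : b * r ∈ Ideal.ofList rs) : b ∈ Ideal.ofList rs := by
  obtain ⟨-, hr⟩ := (isWeaklyRegular_append_iff R rs [r]).mp h
  rw [isWeaklyRegular_singleton_iff, smul_eq_mul, Ideal.mul_top] at hr
  exact mem_of_isSMulRegular_quotient_of_smul_mem hr (by rwa [smul_eq_mul, mul_comm])

namespace MvPolynomial

variable {σ R : Type*}

section CommSemiring

variable [CommSemiring R] {w : σ → ℕ} {φ : MvPolynomial σ R} {m : ℕ}

theorem isWeightedHomogeneous_iff_sum_mul [Fintype σ] :
    IsWeightedHomogeneous w φ m ↔ ∀ α ∈ φ.support, ∑ i, w i * α i = m := by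
  simp only [IsWeightedHomogeneous, mem_support_iff, weight_eq_sum, smul_eq_mul, mul_comm]

variable (R) in
def weightGTIdeal (w : σ → ℕ) (m : ℕ) : Ideal (MvPolynomial σ R) where
  carrier := {p | ∀ α ∈ p.support, m < weight w α}
  add_mem' {p q} hp hq α hα := by
    classical
    exact (Finset.mem_union.mp (support_add hα)).elim (hp α) (hq α)
  zero_mem' _ hα := by simp at hα
  smul_mem' c p hp α hα := by
    classical
    obtain ⟨β, -, γ, hγ, rfl⟩ := Finset.mem_add.mp (support_mul c p hα)
    have := hp γ hγ
    rw [map_add]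
    omega

theorem mem_weightGTIdeal {p : MvPolynomial σ R} :
    p ∈ weightGTIdeal R w m ↔ ∀ α ∈ p.support, m < weight w α :=
  Iff.rfl

theorem IsWeightedHomogeneous.mem_weightGTIdeal {n : ℕ} (hφ : IsWeightedHomogeneous w φ n)
    (h : m < n) : φ ∈ weightGTIdeal R w m :=
  MvPolynomial.mem_weightGTIdeal.mpr fun _ hα => hφ (mem_support_iff.mp hα) ▸ h

theorem IsWeightedHomogeneous.eq_zero_of_mem_weightGTIdeal (hφ : IsWeightedHomogeneous w φ m)
    (hmem : φ ∈ weightGTIdeal R w m) : φ = 0 := by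
  rw [← support_eq_empty, Finset.eq_empty_iff_forall_notMem]
  exact fun α hα =>
    (MvPolynomial.mem_weightGTIdeal.mp hmem α hα).ne (hφ (mem_support_iff.mp hα)).symm

end CommSemiring

theorem eq_zero_of_sum_mul_eq_zero_of_isWeaklyRegular [CommRing R] {w : σ → ℕ} :
    ∀ {k : ℕ} {r b : Fin k → MvPolynomial σ R} {e : Fin k → ℕ},
      IsWeaklyRegular (MvPolynomial σ R) (List.ofFn r) →
      (∀ i j, r j ∈ weightGTIdeal R w (e i)) →
      (∀ i, IsWeightedHomogeneous w (b i) (e i)) →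
      ∑ i, b i * r i = 0 → ∀ i, b i = 0
  | 0, _, _, _, _, _, _, _ => fun i => i.elim0
  | k + 1, r, b, e, hreg, hr, hb, hrel => by
    rw [List.ofFn_succ', List.concat_eq_append] at hreg
    set I := Ideal.ofList (List.ofFn fun i : Fin k => r i.castSucc)
    rw [Fin.sum_univ_castSucc] at hrel
    have hlast_mul : b (Fin.last k) * r (Fin.last k) ∈ I := by
      rw [eq_neg_of_add_eq_zero_right hrel]
      refine neg_mem (Ideal.sum_mem _ fun i _ => Ideal.mul_mem_left _ _ (Ideal.subset_span ?_))
      exact List.mem_ofFn.mpr ⟨i, rfl⟩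
    have hI : I ≤ weightGTIdeal R w (e (Fin.last k)) := by
      refine Ideal.span_le.mpr fun x hx => ?_
      obtain ⟨j, rfl⟩ := List.mem_ofFn.mp hx
      exact hr _ _
    have hlast : b (Fin.last k) = 0 :=
      (hb _).eq_zero_of_mem_weightGTIdeal (hI (hreg.mem_ofList_of_mul_mem hlast_mul))
    rw [hlast, zero_mul, add_zero] at hrel
    have hinit := eq_zero_of_sum_mul_eq_zero_of_isWeaklyRegular
      ((isWeaklyRegular_append_iff _ _ _).mp hreg).1 (fun i j => hr i.castSucc j.castSucc)
      (fun i => hb i.castSucc) hrel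
    exact fun i => Fin.lastCases hlast hinit i

end MvPolynomial

theorem relation_coefficients_vanish_general (n : ℕ) (w : Fin n → ℕ) (d : ℕ)
    (f₀ : MvPolynomial (Fin n) ℂ)
    (hqh : ∀ α ∈ f₀.support, ∑ i, w i * α i = d)
    (hreg : RingTheory.Sequence.IsRegular (MvPolynomial (Fin n) ℂ)
      (List.ofFn fun i => pderiv i f₀))
    (hwd : ∀ i, 2 * w i < d)
    (b : Fin n → MvPolynomial (Fin n) ℂ)
    (hb : ∀ i, ∀ α ∈ (b i).support, ∑ j, w j * α j = w i)
    (hrel : ∑ i, b i * pderiv i f₀ = 0) :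
    ∀ i, b i = 0 := by
  have hf₀ : IsWeightedHomogeneous w f₀ d := isWeightedHomogeneous_iff_sum_mul.mpr hqh
  have hpartial (i j : Fin n) : pderiv j f₀ ∈ weightGTIdeal ℂ w (w i) :=
    (hf₀.pderiv (n' := d - w j) (by have := hwd j; omega)).mem_weightGTIdeal
      (by have := hwd i; have := hwd j; omega)
  exact eq_zero_of_sum_mul_eq_zero_of_isWeaklyRegular hreg.toIsWeaklyRegular hpartial
    (fun i => isWeightedHomogeneous_iff_sum_mul.mpr (hb i)) hrel

/-- If `f₀` is quasihomogeneous of degree `d` with `2wᵢ < d` for all `i`, the partials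
form a regular sequence, and `bᵢ` are quasihomogeneous of degree `wᵢ` (or zero) with
`Σ bᵢ ∂f₀/∂xᵢ = 0`, then all `bᵢ = 0`. -/
theorem relation_coefficients_vanish (n : ℕ) (w : Fin n → ℕ) (d : ℕ)
    (hw : ∀ i, 0 < w i) (hd : 0 < d)
    (f₀ : MvPolynomial (Fin n) ℂ)
    (hqh : ∀ α ∈ f₀.support, ∑ i, w i * α i = d)
    (hreg : RingTheory.Sequence.IsRegular (MvPolynomial (Fin n) ℂ)
      (List.ofFn fun i => pderiv i f₀))
    (hwd : ∀ i, 2 * w i < d)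
    (b : Fin n → MvPolynomial (Fin n) ℂ)
    (hb : ∀ i, ∀ α ∈ (b i).support, ∑ j, w j * α j = w i)
    (hrel : ∑ i, b i * pderiv i f₀ = 0) :
    ∀ i, b i = 0 :=
  relation_coefficients_vanish_general n w d f₀ hqh hreg hwd b hb hrel
end

section
/- Let f₀ be quasihomogeneous of type (d; w₁,...,wₙ) with all wᵢ > 0. If f = f₀ + f₁ is semiquasihomogeneous (deg f₁ > d) and φ is an automorphism of ℂ{x} of degree ≥ 0, then φ(f) is again semiquasihomogeneous of degree d, and its principal part (sum of terms of weighted degree d) equals φ₀(f₀), where φ₀ is the quasihomogeneous part of φ; in particular if φ has degree > 0 then the principal part of φ(f) equals f₀. -/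
open MvPowerSeries

/-!
Since the weights are positive, a series of weighted order `≥ e > 0` can be written as
`∑ Xᵢ gᵢ` with `ord gᵢ ≥ e - wᵢ`; by strong induction on `e`, an endomorphism `φ` with
`ord φ(Xᵢ) ≥ wᵢ` therefore never lowers the weighted order. So `φ(f₁)` only contributes in
degrees `> d`, while `φ(f₀) = f₀(φ(X))`, and taking the lowest weighted-homogeneous component is
multiplicative, so the degree-`d` part of `f₀(φ(X))` is `f₀(φ₀(X))`.
-/

/-- Weighted order of a multivariate power series (⊤ for the zero series). -/
noncomputable def wOrd {n : ℕ} (w : Fin n → ℕ) (g : MvPowerSeries (Fin n) ℂ) : ℕ∞ :=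
  sInf {m : ℕ∞ | ∃ α : Fin n →₀ ℕ, MvPowerSeries.coeff α g ≠ 0 ∧ m = (∑ i, w i * α i : ℕ)}

/-- The part of weighted degree exactly `e` of a power series. -/
noncomputable def ppart {n : ℕ} (w : Fin n → ℕ) (e : ℕ) (g : MvPowerSeries (Fin n) ℂ) :
    MvPowerSeries (Fin n) ℂ :=
  fun α => if ∑ i, w i * α i = e then MvPowerSeries.coeff α g else 0

namespace MvPowerSeries

section Semiring

variable {σ R : Type*} [Semiring R] (w : σ → ℕ)

theorem le_weightedOrder_X (i : σ) : (w i : ℕ∞) ≤ (X i : MvPowerSeries σ R).weightedOrder w := by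
  classical
  refine nat_le_weightedOrder w fun d hd => ?_
  rw [coeff_X, if_neg]
  rintro rfl
  simp [Finsupp.weight_single] at hd

theorem weightedHomogeneousComponent_X (i : σ) :
    weightedHomogeneousComponent w (w i) (X i : MvPowerSeries σ R) = X i := by
  classical
  ext d
  rw [coeff_weightedHomogeneousComponent, coeff_X]
  split_ifs <;> simp_all [Finsupp.weight_single]

theorem weightedHomogeneousComponent_zero_one :
    weightedHomogeneousComponent w 0 (1 : MvPowerSeries σ R) = 1 := by
  classical
  ext d
  rw [coeff_weightedHomogeneousComponent, coeff_one]
  split_ifs <;> simp_all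

theorem weightedOrder_le_add_weightedOrder_of_coeff_ne_zero {f g : MvPowerSeries σ R} {i : σ}
    (h : ∀ d, coeff d g ≠ 0 → coeff (d + Finsupp.single i 1) f ≠ 0) :
    f.weightedOrder w ≤ w i + g.weightedOrder w := by
  by_cases htop : g.weightedOrder w = ⊤
  · simp [htop]
  obtain ⟨d, hd, hwd⟩ := exists_coeff_ne_zero_and_weightedOrder w (ENat.natCast_toNat htop)
  calc f.weightedOrder w ≤ Finsupp.weight w (d + Finsupp.single i 1) := weightedOrder_le w (h d hd)
    _ = w i + g.weightedOrder w := by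
      rw [← hwd, map_add, Finsupp.weight_single, smul_eq_mul, one_mul, Nat.cast_add, add_comm]

theorem exists_eq_sum_X_mul [Fintype σ] {f : MvPowerSeries σ R} (hf : constantCoeff f = 0) :
    ∃ g : σ → MvPowerSeries σ R, f = ∑ i, X i * g i ∧
      ∀ i, f.weightedOrder w ≤ w i + (g i).weightedOrder w := by
  classical
  have hne : ∀ (d : σ →₀ ℕ) (i : σ), d + Finsupp.single i 1 ≠ 0 := fun d i h => by
    simpa using congrArg (· i) h
  choose sel hsel using fun d : {d : σ →₀ ℕ // d ≠ 0} => Finsupp.support_nonempty_iff.mpr d.2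
  have hsel_sub : ∀ {α : σ →₀ ℕ} (hα : α ≠ 0) {i : σ} (hi : Finsupp.single i 1 ≤ α),
      sel ⟨α - Finsupp.single i 1 + Finsupp.single i 1, hne _ i⟩ = sel ⟨α, hα⟩ :=
    fun hα i hi => congrArg sel (Subtype.ext (tsub_add_cancel_of_le hi))
  -- the monomial `x^d` of `f` with `d ≠ 0` is attributed to the variable `sel d` dividing it
  let g : σ → MvPowerSeries σ R := fun i d =>
    if sel ⟨d + Finsupp.single i 1, hne d i⟩ = i then coeff (d + Finsupp.single i 1) f else 0
  have coeff_X_mul_g : ∀ i α, coeff α (X i * g i) = if Finsupp.single i 1 ≤ α then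
      (if sel ⟨α - Finsupp.single i 1 + Finsupp.single i 1, hne _ i⟩ = i then
        coeff (α - Finsupp.single i 1 + Finsupp.single i 1) f else 0) else 0 := fun i α => by
    rw [X_def, coeff_monomial_mul, one_mul]; rfl
  refine ⟨g, ?_, fun i => ?_⟩
  · ext α
    rw [map_sum]
    by_cases hα : α = 0
    · subst hα
      simp [coeff_X_mul_g, hf]
    · rw [Finset.sum_eq_single (sel ⟨α, hα⟩)]
      · have hle : Finsupp.single (sel ⟨α, hα⟩) 1 ≤ α := by
          simpa [Nat.one_le_iff_ne_zero] using hsel ⟨α, hα⟩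
        rw [coeff_X_mul_g, if_pos hle, hsel_sub hα hle, if_pos rfl, tsub_add_cancel_of_le hle]
      · intro i _ hi
        rw [coeff_X_mul_g]
        split_ifs with hle h
        · exact absurd ((hsel_sub hα hle).symm.trans h).symm hi
        · rfl
        · rfl
      · simp
  · refine weightedOrder_le_add_weightedOrder_of_coeff_ne_zero w fun d hd h => hd ?_
    change (if _ then _ else _) = _
    rw [h, ite_self]

variable {w}

theorem le_weightedOrder_sum {ι : Type*} (s : Finset ι) {f : ι → MvPowerSeries σ R} {n : ℕ∞}
    (hf : ∀ i ∈ s, n ≤ (f i).weightedOrder w) : n ≤ (∑ i ∈ s, f i).weightedOrder w :=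
  le_weightedOrder w fun d hd => by
    rw [map_sum]
    exact Finset.sum_eq_zero fun i hi => coeff_eq_zero_of_lt_weightedOrder w (hd.trans_le (hf i hi))

theorem weightedOrder_le_weightedOrder_apply [Fintype σ] (hw : ∀ i, 0 < w i)
    {φ : MvPowerSeries σ R →+* MvPowerSeries σ R}
    (hφ : ∀ i, (w i : ℕ∞) ≤ (φ (X i)).weightedOrder w) (f : MvPowerSeries σ R) :
    f.weightedOrder w ≤ (φ f).weightedOrder w := by
  refine ENat.forall_natCast_le_iff_le.mp fun e => ?_
  induction e using Nat.strong_induction_on generalizing f with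
  | _ e ih =>
  intro hf
  rcases Nat.eq_zero_or_pos e with rfl | he
  · simp
  have hf0 : constantCoeff f = 0 := by
    rw [← coeff_zero_eq_constantCoeff_apply]
    exact coeff_eq_zero_of_lt_weightedOrder w
      (by simpa using lt_of_lt_of_le (Nat.cast_pos.mpr he) hf)
  obtain ⟨g, rfl, hg⟩ := exists_eq_sum_X_mul w hf0
  rw [map_sum]
  refine le_weightedOrder_sum _ fun i _ => ?_
  have hgi : ((e - w i : ℕ) : ℕ∞) ≤ (g i).weightedOrder w := by
    rw [ENat.natCast_sub, tsub_le_iff_left]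
    exact hf.trans (hg i)
  calc (e : ℕ∞) ≤ (w i : ℕ∞) + (e - w i : ℕ) := by norm_cast; omega
    _ ≤ (φ (X i)).weightedOrder w + (φ (g i)).weightedOrder w :=
      add_le_add (hφ i) (ih _ (Nat.sub_lt he (hw i)) _ hgi)
    _ ≤ (φ (X i * g i)).weightedOrder w := by rw [map_mul]; exact le_weightedOrder_mul w

theorem weightedHomogeneousComponent_pow {f : MvPowerSeries σ R} {p : ℕ}
    (hf : (p : ℕ∞) ≤ f.weightedOrder w) (n : ℕ) :
    weightedHomogeneousComponent w (n * p) (f ^ n) = weightedHomogeneousComponent w p f ^ n := by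
  induction n with
  | zero => simp [weightedHomogeneousComponent_zero_one]
  | succ n ih =>
    have hfn : ((n * p : ℕ) : ℕ∞) ≤ (f ^ n).weightedOrder w := by
      grw [← le_weightedOrder_pow, ← hf]; simp
    rw [pow_succ, pow_succ, ← ih, add_mul, one_mul,
      weightedHomogeneousComponent_mul_of_le_weightedOrder hfn hf]

end Semiring

section CommSemiring

variable {σ R : Type*} [CommSemiring R] {w : σ → ℕ}

theorem weightedHomogeneousComponent_prod {ι : Type*} (s : Finset ι) {f : ι → MvPowerSeries σ R}
    {p : ι → ℕ} (hf : ∀ i ∈ s, (p i : ℕ∞) ≤ (f i).weightedOrder w) :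
    weightedHomogeneousComponent w (∑ i ∈ s, p i) (∏ i ∈ s, f i)
      = ∏ i ∈ s, weightedHomogeneousComponent w (p i) (f i) := by
  induction s using Finset.cons_induction with
  | empty => simp [weightedHomogeneousComponent_zero_one]
  | cons a s ha ih =>
    have hs : ((∑ i ∈ s, p i : ℕ) : ℕ∞) ≤ (∏ i ∈ s, f i).weightedOrder w := by
      grw [← le_weightedOrder_prod]
      push_cast
      exact Finset.sum_le_sum fun i hi => hf i (Finset.mem_cons_of_mem hi)
    rw [Finset.sum_cons, Finset.prod_cons, Finset.prod_cons,
      weightedHomogeneousComponent_mul_of_le_weightedOrder (hf a (Finset.mem_cons_self a s)) hs,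
      ih fun i hi => hf i (Finset.mem_cons_of_mem hi)]

theorem weightedHomogeneousComponent_aeval {Φ : σ → MvPowerSeries σ R}
    (hΦ : ∀ i, (w i : ℕ∞) ≤ (Φ i).weightedOrder w) {q : MvPolynomial σ R} {d : ℕ}
    (hq : q.IsWeightedHomogeneous w d) :
    weightedHomogeneousComponent w d (MvPolynomial.aeval Φ q)
      = MvPolynomial.aeval (fun i => weightedHomogeneousComponent w (w i) (Φ i)) q := by
  classical
  conv_lhs => rw [q.as_sum]
  conv_rhs => rw [q.as_sum]
  simp only [map_sum]
  refine Finset.sum_congr rfl fun β hβ => ?_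
  have hpow : ∀ i ∈ β.support, ((β i * w i : ℕ) : ℕ∞) ≤ (Φ i ^ β i).weightedOrder w :=
    fun i _ => by grw [← le_weightedOrder_pow, ← hΦ i]; simp
  rw [MvPolynomial.aeval_monomial, MvPolynomial.aeval_monomial, ← Algebra.smul_def,
    ← Algebra.smul_def, map_smul, ← hq (MvPolynomial.mem_support_iff.mp hβ), Finsupp.weight_apply]
  simp only [Finsupp.prod, Finsupp.sum, smul_eq_mul]
  rw [weightedHomogeneousComponent_prod _ hpow]
  simp only [weightedHomogeneousComponent_pow (hΦ _)]

theorem map_coe_eq_aeval {A F : Type*} [CommSemiring A] [Algebra R A]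
    [FunLike F (MvPowerSeries σ R) A] [AlgHomClass F R (MvPowerSeries σ R) A] (φ : F)
    (q : MvPolynomial σ R) :
    φ q = MvPolynomial.aeval (fun i => φ (X i)) q := by
  have h := MvPolynomial.aeval_unique ((AlgHomClass.toAlgHom φ).comp
    (MvPolynomial.coeToMvPowerSeries.algHom R))
  simpa [Function.comp_def] using congrArg (· q) h

end CommSemiring

theorem lt_weightedOrder_sub_weightedHomogeneousComponent {σ R : Type*} [Ring R] {w : σ → ℕ}
    {f : MvPowerSeries σ R} {p : ℕ} (hf : (p : ℕ∞) ≤ f.weightedOrder w) :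
    (p : ℕ∞) < (f - weightedHomogeneousComponent w p f).weightedOrder w := by
  rw [← ENat.add_one_le_iff (ENat.natCast_ne_top p)]
  refine nat_le_weightedOrder w fun d hd => ?_
  rw [map_sub, coeff_weightedHomogeneousComponent]
  split_ifs with h
  · exact sub_self _
  · have hd' : Finsupp.weight w d < p := by
      have : Finsupp.weight w d < p + 1 := by exact_mod_cast hd
      omega
    rw [sub_zero]
    exact coeff_eq_zero_of_lt_weightedOrder w (lt_of_lt_of_le (Nat.cast_lt.mpr hd') hf)

end MvPowerSeries

theorem MvPolynomial.IsWeightedHomogeneous.le_weightedOrder_coe {σ R : Type*} [CommSemiring R]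
    {w : σ → ℕ} {q : MvPolynomial σ R} {d : ℕ} (hq : q.IsWeightedHomogeneous w d) :
    (d : ℕ∞) ≤ (q : MvPowerSeries σ R).weightedOrder w :=
  nat_le_weightedOrder w fun α hα => by
    rw [MvPolynomial.coeff_coe]
    by_contra h
    exact hα.ne (hq h)

section Weights

variable {n : ℕ} (w : Fin n → ℕ)

theorem sum_mul_eq_weight (α : Fin n →₀ ℕ) : ∑ i, w i * α i = Finsupp.weight w α := by
  simp [Finsupp.weight_eq_sum, mul_comm]

theorem wOrd_eq_weightedOrder (g : MvPowerSeries (Fin n) ℂ) : wOrd w g = g.weightedOrder w := by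
  refine le_antisymm (le_weightedOrder w fun α hα => ?_) (le_sInf ?_)
  · by_contra h
    exact hα.not_ge (sInf_le ⟨α, h, by rw [sum_mul_eq_weight]⟩)
  · rintro _ ⟨α, hα, rfl⟩
    rw [sum_mul_eq_weight]
    exact weightedOrder_le w hα

theorem ppart_eq_weightedHomogeneousComponent (e : ℕ) (g : MvPowerSeries (Fin n) ℂ) :
    ppart w e g = weightedHomogeneousComponent w e g := by
  ext α
  rw [coeff_weightedHomogeneousComponent, ← sum_mul_eq_weight]
  rfl

end Weights

/-- If `f = f₀ + f₁` is semiquasihomogeneous of degree `d` (with `f₀` a quasihomogeneous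
polynomial of degree `d` and `deg f₁ > d`) and `φ` is an automorphism of degree `≥ 0`,
then `φ(f)` is again semiquasihomogeneous of degree `d` with principal part
`φ₀(f₀)`, where `φ₀` is the quasihomogeneous part of `φ`; if moreover `deg φ > 0`,
the principal part of `φ(f)` is `f₀` itself. -/
theorem principal_part_under_automorphism (n : ℕ) (w : Fin n → ℕ) (d : ℕ)
    (hw : ∀ i, 0 < w i)
    (f₀ : MvPolynomial (Fin n) ℂ)
    (hqh : ∀ α ∈ f₀.support, ∑ i, w i * α i = d)
    (f₁ : MvPowerSeries (Fin n) ℂ) (hf₁ : (d : ℕ∞) < wOrd w f₁)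
    (φ : MvPowerSeries (Fin n) ℂ ≃ₐ[ℂ] MvPowerSeries (Fin n) ℂ)
    (hφ : ∀ i, (w i : ℕ∞) ≤ wOrd w (φ (MvPowerSeries.X i) - MvPowerSeries.X i)) :
    ppart w d (φ ((f₀ : MvPowerSeries (Fin n) ℂ) + f₁))
        = MvPolynomial.aeval (fun i => ppart w (w i) (φ (MvPowerSeries.X i))) f₀ ∧
    (d : ℕ∞) < wOrd w (φ ((f₀ : MvPowerSeries (Fin n) ℂ) + f₁)
        - ppart w d (φ ((f₀ : MvPowerSeries (Fin n) ℂ) + f₁))) ∧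
    ((∀ i, (w i : ℕ∞) < wOrd w (φ (MvPowerSeries.X i) - MvPowerSeries.X i)) →
      ppart w d (φ ((f₀ : MvPowerSeries (Fin n) ℂ) + f₁)) = (f₀ : MvPowerSeries (Fin n) ℂ)) := by
  have hq : f₀.IsWeightedHomogeneous w d := fun α hα => by
    rw [← sum_mul_eq_weight]
    exact hqh α (MvPolynomial.mem_support_iff.mpr hα)
  simp only [wOrd_eq_weightedOrder, ppart_eq_weightedHomogeneousComponent] at hf₁ hφ ⊢
  have hφX : ∀ i, (w i : ℕ∞) ≤ (φ (X i)).weightedOrder w := fun i => by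
    simpa using (le_min (hφ i) (le_weightedOrder_X w i)).trans (min_weightedOrder_le_add w)
  have hφ_order : ∀ f, f.weightedOrder w ≤ (φ f).weightedOrder w :=
    weightedOrder_le_weightedOrder_apply hw (φ := (φ : MvPowerSeries (Fin n) ℂ →+* _)) hφX
  have hpp : weightedHomogeneousComponent w d (φ (f₀ + f₁))
      = MvPolynomial.aeval (fun i => weightedHomogeneousComponent w (w i) (φ (X i))) f₀ := by
    rw [map_add, map_add, weightedHomogeneousComponent_of_lt_weightedOrder_eq_zero
      (hf₁.trans_le (hφ_order f₁)), add_zero, map_coe_eq_aeval]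
    exact weightedHomogeneousComponent_aeval hφX hq
  refine ⟨hpp, lt_weightedOrder_sub_weightedHomogeneousComponent ?_, fun hφ_pos => ?_⟩
  · exact ((le_min hq.le_weightedOrder_coe hf₁.le).trans (min_weightedOrder_le_add w)).trans
      (hφ_order _)
  · have hφ₀ : ∀ i, weightedHomogeneousComponent w (w i) (φ (X i)) = X i := fun i => by
      rw [← sub_add_cancel (φ (X i)) (X i), map_add,
        weightedHomogeneousComponent_of_lt_weightedOrder_eq_zero (hφ_pos i), zero_add,
        weightedHomogeneousComponent_X]
    rw [hpp]
    simpa [hφ₀] using (map_coe_eq_aeval (AlgHom.id ℂ (MvPowerSeries (Fin n) ℂ)) f₀).symm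
end

section
/- Let g₀ = x³ + y³ and let G be the group of linear automorphisms of ℂ² preserving g₀. Then G is a finite group of order 18, isomorphic to (S₃ × ℤ/3), generated by the swap (x,y) ↦ (y,x), the map (x,y) ↦ (ξx, ξ²y), and the scalar map (x,y) ↦ (ξx, ξy), where ξ = e^{2πi/3}. -/
open MvPolynomial Matrix

noncomputable def ξ : ℂ := Complex.exp (2 * Real.pi * Complex.I / 3)

namespace X3Y3Aux

open DihedralGroup

lemma hξ : IsPrimitiveRoot ξ 3 := by
  have := Complex.isPrimitiveRoot_exp 3 (by norm_num)
  simpa [ξ] using this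

lemma hξ3 : ξ ^ 3 = 1 := hξ.pow_eq_one

noncomputable def ζ (a : ZMod 3) : ℂ := ξ ^ a.val

lemma ζ_mul' (a b : ZMod 3) : ζ a * ζ b = ζ (a + b) := by
  rw [ζ, ζ, ζ, ← pow_add, ZMod.val_add, ← pow_eq_pow_mod _ hξ3]

lemma ζ_zero : ζ 0 = 1 := by simp [ζ]

lemma ζ_nat (m : ℕ) : ζ (m : ZMod 3) = ξ ^ m := by
  rw [ζ, ZMod.val_natCast, ← pow_eq_pow_mod _ hξ3]

lemma ζ_cube (a : ZMod 3) : ζ a ^ 3 = 1 := by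
  rw [ζ, ← pow_mul, mul_comm, pow_mul, hξ3, one_pow]

lemma ζ_eq_one {a : ZMod 3} (h : ζ a = 1) : a = 0 := by
  have h1 := (hξ.pow_eq_one_iff_dvd a.val).1 h
  have hlt := ZMod.val_lt a
  have : a.val = 0 := by omega
  exact (ZMod.val_eq_zero a).1 this

abbrev K := DihedralGroup 3 × Multiplicative (ZMod 3)

noncomputable def mat (x : K) : Matrix (Fin 2) (Fin 2) ℂ :=
  match x.1 with
  | .r i => !![ζ (i + Multiplicative.toAdd x.2), 0; 0, ζ (Multiplicative.toAdd x.2 - i)]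
  | .sr i => !![0, ζ (Multiplicative.toAdd x.2 - i); ζ (Multiplicative.toAdd x.2 + i), 0]

lemma mat_one : mat 1 = 1 := by
  show mat (r 0, 1) = 1
  simp [mat, ζ_zero, Matrix.one_fin_two]

set_option linter.unnecessarySeqFocus false in
lemma mat_mul (x y : K) : mat (x * y) = mat x * mat y := by
  obtain ⟨gx, n⟩ := x
  obtain ⟨gy, m⟩ := y
  rcases gx with i | i <;> rcases gy with j | j <;>
    · simp only [Prod.mk_mul_mk, r_mul_r, r_mul_sr, sr_mul_r, sr_mul_sr, toAdd_mul, mat,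
        Matrix.mul_fin_two, mul_zero, zero_mul, add_zero, zero_add, ζ_mul']
      congr 2 <;> ring_nf

noncomputable def φ : K →* GL (Fin 2) ℂ where
  toFun x := ⟨mat x, mat x⁻¹, by rw [← mat_mul, mul_inv_cancel, mat_one],
    by rw [← mat_mul, inv_mul_cancel, mat_one]⟩
  map_one' := Units.ext (by simpa using mat_one)
  map_mul' x y := Units.ext (by simpa using mat_mul x y)

lemma φ_val (x : K) : (φ x : Matrix (Fin 2) (Fin 2) ℂ) = mat x := rfl

lemma φ_inj : Function.Injective φ := by
  apply (injective_iff_map_eq_one φ).2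
  rintro ⟨g, n⟩ h
  have hm : mat (g, n) = 1 := by rw [← φ_val, h]; rfl
  rcases g with i | i
  · have h00 : ζ (i + Multiplicative.toAdd n) = 1 := by
      have := congrFun (congrFun hm 0) 0
      simpa [mat, Matrix.one_fin_two] using this
    have h11 : ζ (Multiplicative.toAdd n - i) = 1 := by
      have := congrFun (congrFun hm 1) 1
      simpa [mat, Matrix.one_fin_two] using this
    have e1 := ζ_eq_one h00
    have e2 := ζ_eq_one h11
    have key : ∀ a b : ZMod 3, a + b = 0 → b - a = 0 → a = 0 ∧ b = 0 := by decide
    have := key i (Multiplicative.toAdd n) e1 e2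
    obtain ⟨hi, hn⟩ := this
    subst hi
    refine Prod.ext ?_ ?_
    · exact (DihedralGroup.one_def).symm
    · exact hn
  · exfalso
    have := congrFun (congrFun hm 0) 0
    simp [mat, Matrix.one_fin_two] at this

def ψ : DihedralGroup 3 →* Equiv.Perm (Fin 3) where
  toFun x := match x with
    | .r i => (finRotate 3) ^ i.val
    | .sr i => Equiv.swap 0 1 * (finRotate 3) ^ i.val
  map_one' := by decide
  map_mul' := by decide

noncomputable def dIso : DihedralGroup 3 ≃* Equiv.Perm (Fin 3) :=
  MulEquiv.ofBijective ψ (by decide)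

lemma classify (a b c d : ℂ) (hdet : a*d - b*c ≠ 0)
    (key : ∀ x y : ℂ, (a*x+b*y)^3 + (c*x+d*y)^3 = x^3 + y^3) :
    (b = 0 ∧ c = 0 ∧ a^3 = 1 ∧ d^3 = 1) ∨ (a = 0 ∧ d = 0 ∧ b^3 = 1 ∧ c^3 = 1) := by
  have q1 : a^3 + c^3 = 1 := by linear_combination key 1 0
  have q2 : b^3 + d^3 = 1 := by linear_combination key 0 1
  have q3 : a^2*b + c^2*d = 0 := by linear_combination (key 1 1 - key 1 (-1) - 2 * key 0 1) / 6
  have q4 : a*b^2 + c*d^2 = 0 := by linear_combination (key 1 1 + key 1 (-1) - 2 * key 1 0) / 6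
  have h5 : a*b*(a*d - b*c) = 0 := by linear_combination d * q3 - c * q4
  have hab : a = 0 ∨ b = 0 := by
    rcases mul_eq_zero.1 h5 with h | h
    · exact mul_eq_zero.1 h
    · exact absurd h hdet
  rcases hab with ha | hb
  · right
    subst ha
    have hc3 : c^3 = 1 := by linear_combination q1
    have hc : c ≠ 0 := by
      intro h; rw [h] at hc3; norm_num at hc3
    have hd : d = 0 := by
      have := mul_eq_zero.1 (by linear_combination q4 : c * d^2 = 0)
      rcases this with h | h
      · exact absurd h hc
      · exact pow_eq_zero_iff (n := 2) (by norm_num) |>.1 h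
    subst hd
    exact ⟨rfl, rfl, by linear_combination q2, hc3⟩
  · left
    subst hb
    have hd3 : d^3 = 1 := by linear_combination q2
    have hd : d ≠ 0 := by
      intro h; rw [h] at hd3; norm_num at hd3
    have hc : c = 0 := by
      have := mul_eq_zero.1 (by linear_combination q3 : c^2 * d = 0)
      rcases this with h | h
      · exact pow_eq_zero_iff (n := 2) (by norm_num) |>.1 h
      · exact absurd h hd
    subst hc
    exact ⟨rfl, rfl, by linear_combination q1, hd3⟩

lemma solve1 : ∀ x y : ZMod 3, 2*(x-y) + 2*(x+y) = x := by decide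
lemma solve2 : ∀ x y : ZMod 3, 2*(x+y) - 2*(x-y) = y := by decide

lemma mem_diag {a d : ℂ} (ha : a^3 = 1) (hd : d^3 = 1) :
    ∃ x : K, mat x = !![a, 0; 0, d] := by
  obtain ⟨i0, -, hi0⟩ := hξ.eq_pow_of_pow_eq_one ha
  obtain ⟨j0, -, hj0⟩ := hξ.eq_pow_of_pow_eq_one hd
  refine ⟨(r (2*((i0 : ZMod 3) - j0)), Multiplicative.ofAdd (2*((i0 : ZMod 3) + j0))), ?_⟩
  show !![ζ (2*((i0 : ZMod 3) - j0) + Multiplicative.toAdd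
      (Multiplicative.ofAdd (2*((i0 : ZMod 3) + j0)))), 0; 0,
      ζ (Multiplicative.toAdd (Multiplicative.ofAdd (2*((i0 : ZMod 3) + j0)))
        - 2*((i0 : ZMod 3) - j0))] = _
  rw [toAdd_ofAdd, solve1, solve2, ζ_nat, ζ_nat, hi0, hj0]

lemma mem_anti {b c : ℂ} (hb : b^3 = 1) (hc : c^3 = 1) :
    ∃ x : K, mat x = !![0, b; c, 0] := by
  obtain ⟨i0, -, hi0⟩ := hξ.eq_pow_of_pow_eq_one hc
  obtain ⟨j0, -, hj0⟩ := hξ.eq_pow_of_pow_eq_one hb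
  refine ⟨(sr (2*((i0 : ZMod 3) - j0)), Multiplicative.ofAdd (2*((i0 : ZMod 3) + j0))), ?_⟩
  show !![0, ζ (Multiplicative.toAdd (Multiplicative.ofAdd (2*((i0 : ZMod 3) + j0)))
        - 2*((i0 : ZMod 3) - j0));
      ζ (Multiplicative.toAdd (Multiplicative.ofAdd (2*((i0 : ZMod 3) + j0)))
        + 2*((i0 : ZMod 3) - j0)), 0] = _
  have h1 : ∀ x y : ZMod 3, 2*(x+y) + 2*(x-y) = x := by decide
  rw [toAdd_ofAdd, solve2, h1, ζ_nat, ζ_nat, hi0, hj0]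

end X3Y3Aux

open X3Y3Aux DihedralGroup

/-- The group `G ⊂ GL(2,ℂ)` of linear automorphisms preserving `g₀ = x³ + y³` is finite
of order `18`, isomorphic to `S₃ × ℤ/3`, and generated by `(x,y) ↦ (y,x)`,
`(x,y) ↦ (ξx, ξ²y)` and `(x,y) ↦ (ξx, ξy)` where `ξ = e^{2πi/3}`. -/
theorem linear_symmetries_x3_plus_y3 :
    ∃ H : Subgroup (GL (Fin 2) ℂ),
      (H : Set (GL (Fin 2) ℂ))
        = {A : GL (Fin 2) ℂ | MvPolynomial.aeval
            (fun i => ∑ j, MvPolynomial.C ((A : Matrix (Fin 2) (Fin 2) ℂ) i j) * X j)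
            ((X 0) ^ 3 + (X 1) ^ 3 : MvPolynomial (Fin 2) ℂ)
          = (X 0) ^ 3 + (X 1) ^ 3} ∧
      Nat.card ↥H = 18 ∧
      Nonempty (↥H ≃* Equiv.Perm (Fin 3) × Multiplicative (ZMod 3)) ∧
      H = Subgroup.closure {A : GL (Fin 2) ℂ |
        (A : Matrix (Fin 2) (Fin 2) ℂ) = !![0, 1; 1, 0] ∨
        (A : Matrix (Fin 2) (Fin 2) ℂ) = !![ξ, 0; 0, ξ ^ 2] ∨
        (A : Matrix (Fin 2) (Fin 2) ℂ) = !![ξ, 0; 0, ξ]} := by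
  refine ⟨φ.range, ?_, ?_, ?_, ?_⟩
  · -- set equality
    ext A
    simp only [SetLike.mem_coe, MonoidHom.mem_range, Set.mem_setOf_eq]
    constructor
    · rintro ⟨⟨g, n⟩, rfl⟩
      rcases g with i | i
      · have hA : (φ ((r i, n) : K) : Matrix (Fin 2) (Fin 2) ℂ)
            = !![ζ (i + Multiplicative.toAdd n), 0; 0, ζ (Multiplicative.toAdd n - i)] := rfl
        have hcu : (C (ζ (i + Multiplicative.toAdd n)) : MvPolynomial (Fin 2) ℂ)^3 = 1 := by
          rw [← map_pow, ζ_cube, MvPolynomial.C_1]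
        have hcv : (C (ζ (Multiplicative.toAdd n - i)) : MvPolynomial (Fin 2) ℂ)^3 = 1 := by
          rw [← map_pow, ζ_cube, MvPolynomial.C_1]
        simp [hA, Fin.sum_univ_two]
        linear_combination (X 0 : MvPolynomial (Fin 2) ℂ)^3 * hcu
          + (X 1 : MvPolynomial (Fin 2) ℂ)^3 * hcv
      · have hA : (φ ((sr i, n) : K) : Matrix (Fin 2) (Fin 2) ℂ)
            = !![0, ζ (Multiplicative.toAdd n - i); ζ (Multiplicative.toAdd n + i), 0] := rfl
        have hcu : (C (ζ (Multiplicative.toAdd n - i)) : MvPolynomial (Fin 2) ℂ)^3 = 1 := by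
          rw [← map_pow, ζ_cube, MvPolynomial.C_1]
        have hcv : (C (ζ (Multiplicative.toAdd n + i)) : MvPolynomial (Fin 2) ℂ)^3 = 1 := by
          rw [← map_pow, ζ_cube, MvPolynomial.C_1]
        simp [hA, Fin.sum_univ_two]
        linear_combination (X 1 : MvPolynomial (Fin 2) ℂ)^3 * hcu
          + (X 0 : MvPolynomial (Fin 2) ℂ)^3 * hcv
    · intro hA
      set M : Matrix (Fin 2) (Fin 2) ℂ := (A : Matrix (Fin 2) (Fin 2) ℂ) with hM
      have hdet : M 0 0 * M 1 1 - M 0 1 * M 1 0 ≠ 0 := by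
        have h1 : IsUnit M.det := (Matrix.isUnit_iff_isUnit_det M).1 A.isUnit
        rw [Matrix.det_fin_two] at h1
        exact h1.ne_zero
      have key : ∀ x y : ℂ, (M 0 0 * x + M 0 1 * y)^3 + (M 1 0 * x + M 1 1 * y)^3
          = x^3 + y^3 := by
        intro x y
        have := congrArg (MvPolynomial.eval ![x, y]) hA
        simpa [Fin.sum_univ_two] using this
      rcases classify (M 0 0) (M 0 1) (M 1 0) (M 1 1) hdet key with
        ⟨hb, hc, ha3, hd3⟩ | ⟨ha, hd, hb3, hc3⟩
      · obtain ⟨x, hx⟩ := mem_diag ha3 hd3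
        refine ⟨x, Units.ext ?_⟩
        rw [φ_val, hx, ← hM, Matrix.eta_fin_two M, hb, hc]
        simp
      · obtain ⟨x, hx⟩ := mem_anti hb3 hc3
        refine ⟨x, Units.ext ?_⟩
        rw [φ_val, hx, ← hM, Matrix.eta_fin_two M, ha, hd]
        simp
  · -- cardinality
    have e := MonoidHom.ofInjective (f := φ) φ_inj
    rw [← Nat.card_congr e.toEquiv]
    simp [Nat.card_eq_fintype_card, DihedralGroup.card]
  · -- isomorphism
    exact ⟨((MonoidHom.ofInjective (f := φ) φ_inj).symm).trans
      (MulEquiv.prodCongr dIso (MulEquiv.refl _))⟩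
  · -- closure
    have g1 : (φ ((sr 0, 1) : K) : Matrix (Fin 2) (Fin 2) ℂ) = !![0, 1; 1, 0] := by
      show mat ((sr 0, 1) : K) = _
      simp [mat, ζ_zero]
    have g2 : (φ ((r 1, 1) : K) : Matrix (Fin 2) (Fin 2) ℂ) = !![ξ, 0; 0, ξ ^ 2] := by
      show mat ((r 1, 1) : K) = _
      have e1 : ((1 : ZMod 3) + Multiplicative.toAdd (1 : Multiplicative (ZMod 3)))
          = ((1 : ℕ) : ZMod 3) := by decide
      have e2 : (Multiplicative.toAdd (1 : Multiplicative (ZMod 3)) - (1 : ZMod 3))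
          = ((2 : ℕ) : ZMod 3) := by decide
      show !![ζ ((1 : ZMod 3) + Multiplicative.toAdd (1 : Multiplicative (ZMod 3))), 0; 0,
          ζ (Multiplicative.toAdd (1 : Multiplicative (ZMod 3)) - (1 : ZMod 3))] = _
      rw [e1, e2, ζ_nat, ζ_nat, pow_one]
    have g3 : (φ ((r 0, Multiplicative.ofAdd 1) : K) : Matrix (Fin 2) (Fin 2) ℂ)
        = !![ξ, 0; 0, ξ] := by
      show mat ((r 0, Multiplicative.ofAdd 1) : K) = _
      have e1 : ((0 : ZMod 3) + Multiplicative.toAdd (Multiplicative.ofAdd (1 : ZMod 3)))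
          = ((1 : ℕ) : ZMod 3) := by decide
      have e2 : (Multiplicative.toAdd (Multiplicative.ofAdd (1 : ZMod 3)) - (0 : ZMod 3))
          = ((1 : ℕ) : ZMod 3) := by decide
      show !![ζ ((0 : ZMod 3) + Multiplicative.toAdd (Multiplicative.ofAdd (1 : ZMod 3))), 0; 0,
          ζ (Multiplicative.toAdd (Multiplicative.ofAdd (1 : ZMod 3)) - (0 : ZMod 3))] = _
      rw [e1, e2, ζ_nat, pow_one]
    set S : Set (GL (Fin 2) ℂ) := {A : GL (Fin 2) ℂ |
        (A : Matrix (Fin 2) (Fin 2) ℂ) = !![0, 1; 1, 0] ∨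
        (A : Matrix (Fin 2) (Fin 2) ℂ) = !![ξ, 0; 0, ξ ^ 2] ∨
        (A : Matrix (Fin 2) (Fin 2) ℂ) = !![ξ, 0; 0, ξ]} with hS
    have m1 : φ ((sr 0, 1) : K) ∈ Subgroup.closure S := Subgroup.subset_closure (Or.inl g1)
    have m2 : φ ((r 1, 1) : K) ∈ Subgroup.closure S :=
      Subgroup.subset_closure (Or.inr (Or.inl g2))
    have m3 : φ ((r 0, Multiplicative.ofAdd 1) : K) ∈ Subgroup.closure S :=
      Subgroup.subset_closure (Or.inr (Or.inr g3))
    apply le_antisymm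
    · rintro _ ⟨⟨g, n⟩, rfl⟩
      have k1 : ∀ (i : ZMod 3) (m : Multiplicative (ZMod 3)),
          ((r i, m) : K) = ((r 1, 1) : K) ^ i.val
            * ((r 0, Multiplicative.ofAdd 1) : K) ^ (Multiplicative.toAdd m).val := by decide
      have hr : ∀ (i : ZMod 3) (m : Multiplicative (ZMod 3)),
          φ ((r i, m) : K) ∈ Subgroup.closure S := by
        intro i m
        rw [k1 i m, _root_.map_mul, _root_.map_pow, _root_.map_pow]
        exact mul_mem (pow_mem m2 _) (pow_mem m3 _)
      rcases g with i | i
      · exact hr i n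
      · have k2 : ((sr i, n) : K) = ((sr 0, 1) : K) * ((r i, n) : K) := by
          refine Prod.ext ?_ ?_ <;> simp [sr_mul_r]
        rw [k2, _root_.map_mul]
        exact mul_mem m1 (hr i n)
    · rw [Subgroup.closure_le]
      rintro A (h | h | h)
      · exact ⟨(sr 0, 1), Units.ext (by rw [φ_val]; exact g1.trans h.symm)⟩
      · exact ⟨(r 1, 1), Units.ext (by rw [φ_val]; exact g2.trans h.symm)⟩
      · exact ⟨(r 0, Multiplicative.ofAdd 1), Units.ext (by rw [φ_val]; exact g3.trans h.symm)⟩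
end
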